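/- (Theorem 1.) Let p be a strictly positive joint probability mass function of random variables (X_1, …, X_d, Y) on finite types, let G be a graph on vertex set {1,…,d}, fix a node i and an integer k ≥ 0, and let N_k(i) be the set of nodes at graph distance at most k from i. Suppose there exists a subset S ⊆ N_k(i) with i ∈ S such that for every U ⊆ S \ {i} and every V ⊆ {1,…,d} \ S, both I_a(X_i; X_V | X_U, Y) ≤ ε and I_a(X_i; X_V | X_U) ≤ ε. Then the expected error between the L-Shapley estimate of order k and the Shapley value satisfies E_X | φ̂^k_X(i) − φ_X(i) | ≤ 4ε, where the expectation is over X drawn from the marginal distribution of p. -/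

import Mathlib

open scoped Classical BigOperators

variable {d : ℕ} {𝒳 : Fin d → Type*} [∀ j, Fintype (𝒳 j)] {𝒴 : Type*} [Fintype 𝒴]

/-- The joint marginal probability `p(x_S, y)` of `(X_S, Y)` at the restriction of `x` to `S`. -/
noncomputable def margXY (p : (∀ j, 𝒳 j) → 𝒴 → ℝ) (S : Finset (Fin d))
    (x : ∀ j, 𝒳 j) (y : 𝒴) : ℝ :=
  ∑ x' : ∀ j, 𝒳 j, if ∀ j ∈ S, x' j = x j then p x' y else 0

/-- The marginal probability `p(x_S)` of `X_S` at the restriction of `x` to `S`. -/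
noncomputable def margX (p : (∀ j, 𝒳 j) → 𝒴 → ℝ) (S : Finset (Fin d))
    (x : ∀ j, 𝒳 j) : ℝ :=
  ∑ y, margXY p S x y

/-- The marginal probability `p(x)` of the full feature vector `X`. -/
noncomputable def pX (p : (∀ j, 𝒳 j) → 𝒴 → ℝ) (x : ∀ j, 𝒳 j) : ℝ :=
  ∑ y, p x y

/-- The conditional probability `p(y | x_S) = p(y, x_S) / p(x_S)`
(for `S = ∅` this is `p(y)` when `p` sums to one). -/
noncomputable def condY (p : (∀ j, 𝒳 j) → 𝒴 → ℝ) (S : Finset (Fin d))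
    (x : ∀ j, 𝒳 j) (y : 𝒴) : ℝ :=
  margXY p S x y / margX p S x

/-- The importance score `v_x(S) = ∑_y p(y | x) log p(y | x_S)`. -/
noncomputable def impScore (p : (∀ j, 𝒳 j) → 𝒴 → ℝ) (x : ∀ j, 𝒳 j)
    (S : Finset (Fin d)) : ℝ :=
  ∑ y, condY p Finset.univ x y * Real.log (condY p S x y)

/-- The marginal contribution `m_x(S, i) = v_x(S) − v_x(S \ {i})`. -/
noncomputable def margContrib (p : (∀ j, 𝒳 j) → 𝒴 → ℝ) (x : ∀ j, 𝒳 j)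
    (S : Finset (Fin d)) (i : Fin d) : ℝ :=
  impScore p x S - impScore p x (S.erase i)

/-- The Shapley value `φ_x(i)`. -/
noncomputable def shapley (p : (∀ j, 𝒳 j) → 𝒴 → ℝ) (x : ∀ j, 𝒳 j) (i : Fin d) : ℝ :=
  (1 / (d : ℝ)) * ∑ A : Finset (Fin d),
    if i ∈ A then margContrib p x A i / ((d - 1).choose (A.card - 1) : ℝ) else 0

/-- The restricted Shapley estimate `φ̂^S_x(i)` over a feature subset `S` containing `i`. -/
noncomputable def shapleyRes (p : (∀ j, 𝒳 j) → 𝒴 → ℝ) (x : ∀ j, 𝒳 j)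
    (S : Finset (Fin d)) (i : Fin d) : ℝ :=
  (1 / (S.card : ℝ)) * ∑ T ∈ S.powerset,
    if i ∈ T then margContrib p x T i / ((S.card - 1).choose (T.card - 1) : ℝ) else 0

/-- The absolute conditional mutual information `I_a(X_A; X_B | X_C)`. -/
noncomputable def IaX (p : (∀ j, 𝒳 j) → 𝒴 → ℝ) (A B C : Finset (Fin d)) : ℝ :=
  ∑ x : ∀ j, 𝒳 j, pX p x *
    |Real.log ((margX p (A ∪ B ∪ C) x * margX p C x) /
      (margX p (A ∪ C) x * margX p (B ∪ C) x))|

/-- The absolute conditional mutual information `I_a(X_A; X_B | X_C, Y)`. -/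
noncomputable def IaXY (p : (∀ j, 𝒳 j) → 𝒴 → ℝ) (A B C : Finset (Fin d)) : ℝ :=
  ∑ x : ∀ j, 𝒳 j, ∑ y, p x y *
    |Real.log ((margXY p (A ∪ B ∪ C) x y * margXY p C x y) /
      (margXY p (A ∪ C) x y * margXY p (B ∪ C) x y))|

/-- The `k`-neighborhood `N_k(i)` of a node `i` in a graph `G`: all nodes at
shortest-path graph distance at most `k` from `i`. -/
noncomputable def nbhd (G : SimpleGraph (Fin d)) (i : Fin d) (k : ℕ) : Finset (Fin d) :=
  Finset.univ.filter fun j => G.Reachable i j ∧ G.dist i j ≤ k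

/-!
The Shapley value of `i` over a player set `D` averages the marginal contributions `m_x(A, i)`,
`i ∈ A ⊆ D`, against the weights `(|A| - 1)! (|D| - |A|)! / |D|!`. These weights are consistent
under restriction: for `S ⊆ D`, the coalitions `A ⊆ D` with `A ∩ S = W` carry in total the weight
of `W` in `S`. So the Shapley value over `S` is the `D`-average of `m_x(A ∩ S, i)`, and replacing
`D` by `S` costs at most the largest expected change `m_x(A, i) - m_x(A ∩ S, i)`. Writing
`A = {i} ∪ V ∪ U` with `U ⊆ S \ {i}` and `V ⊆ D \ S`, that change is the `p(y | x)`-average of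
the pointwise conditional mutual information of `X_i` and `X_V` given `(X_U, Y)` minus that given
`X_U`, so its expectation is at most `2ε`. Doing this for `D = N_k(i)` and for `D = [d]` and
using the triangle inequality gives `4ε`.
-/

open Finset
open scoped Nat

noncomputable def shapleyWeight (n a : ℕ) : ℝ := ((a - 1)! * (n - a)! : ℝ) / n !

lemma shapleyWeight_nonneg (n a : ℕ) : 0 ≤ shapleyWeight n a := by
  unfold shapleyWeight; positivity

lemma shapleyWeight_eq_inv_mul_choose {n a : ℕ} (ha : 1 ≤ a) (han : a ≤ n) :
    shapleyWeight n a = ((n : ℝ) * (n - 1).choose (a - 1))⁻¹ := by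
  obtain ⟨b, rfl⟩ : ∃ b, a = b + 1 := ⟨a - 1, by omega⟩
  obtain ⟨c, rfl⟩ : ∃ c, n = b + c + 1 := ⟨n - b - 1, by omega⟩
  have h := congrArg (Nat.cast (R := ℝ))
    (Nat.choose_mul_factorial_mul_factorial (Nat.le_add_right b c))
  rw [Nat.add_sub_cancel_left] at h
  simp only [shapleyWeight, Nat.add_sub_cancel, show b + c + 1 - (b + 1) = c by omega,
    Nat.factorial_succ (b + c)]
  push_cast at h ⊢
  rw [← h]
  field_simp

lemma shapleyWeight_succ_add_succ {n a : ℕ} (ha : 1 ≤ a) (han : a ≤ n) :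
    shapleyWeight (n + 1) a + shapleyWeight (n + 1) (a + 1) = shapleyWeight n a := by
  obtain ⟨b, rfl⟩ : ∃ b, a = b + 1 := ⟨a - 1, by omega⟩
  obtain ⟨c, rfl⟩ : ∃ c, n = b + c + 1 := ⟨n - b - 1, by omega⟩
  simp only [shapleyWeight, Nat.add_sub_cancel, show b + c + 1 + 1 - (b + 1) = c + 1 by omega,
    show b + c + 1 + 1 - (b + 1 + 1) = c by omega, show b + c + 1 - (b + 1) = c by omega,
    Nat.factorial_succ]
  push_cast
  field_simp
  ring

section Coalitions

variable {α : Type*} [DecidableEq α]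

lemma sum_powerset_shapleyWeight_add_card (T : Finset α) {s a : ℕ} (ha : 1 ≤ a) (has : a ≤ s) :
    ∑ B ∈ T.powerset, shapleyWeight (s + #T) (a + #B) = shapleyWeight s a := by
  induction T using Finset.induction_on with
  | empty => simp
  | insert j T hj ih =>
    rw [sum_powerset_insert hj, card_insert_of_notMem hj, ← ih, ← sum_add_distrib]
    refine sum_congr rfl fun B hB => ?_
    have hBT : B ⊆ T := mem_powerset.mp hB
    rw [card_insert_of_notMem (fun h => hj (hBT h)), ← add_assoc, ← add_assoc]
    exact shapleyWeight_succ_add_succ (by omega) (by have := card_le_card hBT; omega)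

lemma sum_shapleyWeight_inter_eq {D S W : Finset α} (hSD : S ⊆ D) (hWS : W ⊆ S)
    (hW : W.Nonempty) :
    ∑ A ∈ D.powerset with A ∩ S = W, shapleyWeight #D #A = shapleyWeight #S #W := by
  rw [← card_sdiff_add_card_eq_card hSD, add_comm,
    ← sum_powerset_shapleyWeight_add_card (D \ S) hW.card_pos (card_le_card hWS)]
  refine sum_nbij' (· \ S) (W ∪ ·) ?_ ?_ ?_ ?_ ?_ <;> intro A hA <;>
    simp only [mem_filter, mem_powerset] at hA ⊢
  · grind
  · grind
  · grind
  · grind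
  · rw [← card_inter_add_card_sdiff A S, hA.2]

noncomputable def shapleyOn (D : Finset α) (i : α) (f : Finset α → ℝ) : ℝ :=
  ∑ A ∈ D.powerset with i ∈ A, shapleyWeight #D #A * f A

lemma shapleyOn_eq (D : Finset α) (i : α) (f : Finset α → ℝ) :
    shapleyOn D i f = 1 / (#D : ℝ) *
      ∑ A ∈ D.powerset, if i ∈ A then f A / ((#D - 1).choose (#A - 1) : ℝ) else 0 := by
  rw [shapleyOn, sum_filter, mul_sum]
  refine sum_congr rfl fun A hA => ?_
  split_ifs with hiA
  · rw [shapleyWeight_eq_inv_mul_choose (card_pos.2 ⟨i, hiA⟩) (card_le_card (mem_powerset.1 hA))]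
    field_simp
  · rw [mul_zero]

lemma shapleyOn_inter {D S : Finset α} {i : α} (hSD : S ⊆ D) (hiS : i ∈ S)
    (f : Finset α → ℝ) : shapleyOn D i (fun A => f (A ∩ S)) = shapleyOn S i f := by
  rw [shapleyOn, ← sum_fiberwise_of_maps_to (g := (· ∩ S)) (t := {W ∈ S.powerset | i ∈ W})]
  · refine sum_congr rfl fun W hW => ?_
    rw [mem_filter, mem_powerset] at hW
    have hfiber : {A ∈ D.powerset | i ∈ A ∧ A ∩ S = W} = {A ∈ D.powerset | A ∩ S = W} :=
      filter_congr fun A _ => ⟨And.right, fun h => ⟨(mem_inter.1 (h ▸ hW.2)).1, h⟩⟩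
    rw [filter_filter, hfiber, ← sum_shapleyWeight_inter_eq hSD hW.1 ⟨i, hW.2⟩, sum_mul]
    exact sum_congr rfl fun A hA => by rw [(mem_filter.1 hA).2]
  · intro A hA
    simp only [mem_filter, mem_powerset] at hA ⊢
    exact ⟨inter_subset_right, mem_inter.2 ⟨hA.2, hiS⟩⟩

lemma shapleyOn_const {D : Finset α} {i : α} (hiD : i ∈ D) (c : ℝ) :
    shapleyOn D i (fun _ => c) = c := by
  have hsingle : {A ∈ ({i} : Finset α).powerset | i ∈ A} = {{i}} := by
    ext A
    simp only [mem_filter, mem_powerset, subset_singleton_iff, mem_singleton]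
    grind
  rw [shapleyOn_inter (singleton_subset_iff.2 hiD) (mem_singleton_self i) (fun _ => c),
    shapleyOn, hsingle]
  simp [shapleyWeight]

lemma abs_shapleyOn_sub_le (D : Finset α) (i : α) (f g : Finset α → ℝ) :
    |shapleyOn D i f - shapleyOn D i g| ≤ shapleyOn D i (fun A => |f A - g A|) := by
  rw [shapleyOn, shapleyOn, ← sum_sub_distrib]
  refine (abs_sum_le_sum_abs _ _).trans_eq (sum_congr rfl fun A _ => ?_)
  rw [← mul_sub, abs_mul, abs_of_nonneg (shapleyWeight_nonneg _ _)]

lemma sum_mul_abs_shapleyOn_sub_le {ι : Type*} [Fintype ι] {μ : ι → ℝ} (hμ : ∀ x, 0 ≤ μ x)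
    {D : Finset α} {i : α} (hiD : i ∈ D) {f g : ι → Finset α → ℝ} {c : ℝ}
    (h : ∀ A ⊆ D, i ∈ A → ∑ x, μ x * |f x A - g x A| ≤ c) :
    ∑ x, μ x * |shapleyOn D i (f x) - shapleyOn D i (g x)| ≤ c :=
  calc ∑ x, μ x * |shapleyOn D i (f x) - shapleyOn D i (g x)|
      ≤ ∑ x, μ x * shapleyOn D i (fun A => |f x A - g x A|) :=
        sum_le_sum fun x _ => mul_le_mul_of_nonneg_left (abs_shapleyOn_sub_le _ _ _ _) (hμ x)
    _ = shapleyOn D i (fun A => ∑ x, μ x * |f x A - g x A|) := by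
        simp only [shapleyOn, mul_sum]
        rw [sum_comm]
        exact sum_congr rfl fun A _ => sum_congr rfl fun x _ => mul_left_comm _ _ _
    _ ≤ shapleyOn D i (fun _ => c) := by
        refine sum_le_sum fun A hA => ?_
        rw [mem_filter, mem_powerset] at hA
        exact mul_le_mul_of_nonneg_left (h A hA.1 hA.2) (shapleyWeight_nonneg _ _)
    _ = c := shapleyOn_const hiD c

end Coalitions

lemma sum_mul_abs_sub_le_add {ι : Type*} (s : Finset ι) {μ a b c : ι → ℝ}
    (hμ : ∀ x ∈ s, 0 ≤ μ x) :
    ∑ x ∈ s, μ x * |a x - b x| ≤ ∑ x ∈ s, μ x * |a x - c x| + ∑ x ∈ s, μ x * |b x - c x| := by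
  rw [← sum_add_distrib]
  refine sum_le_sum fun x hx => ?_
  rw [← mul_add, abs_sub_comm (b x)]
  exact mul_le_mul_of_nonneg_left (abs_sub_le _ _ _) (hμ x hx)

/- Pointwise conditional mutual informations, so that `IaXY p A B C` and `IaX p A B C` are by
definition the `p`-expectations of `|pmiXY p A B C|` and `|pmiX p A B C|`. -/
noncomputable def pmiXY (p : (∀ j, 𝒳 j) → 𝒴 → ℝ) (A B C : Finset (Fin d)) (x : ∀ j, 𝒳 j)
    (y : 𝒴) : ℝ :=
  Real.log ((margXY p (A ∪ B ∪ C) x y * margXY p C x y) /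
    (margXY p (A ∪ C) x y * margXY p (B ∪ C) x y))

noncomputable def pmiX (p : (∀ j, 𝒳 j) → 𝒴 → ℝ) (A B C : Finset (Fin d)) (x : ∀ j, 𝒳 j) : ℝ :=
  Real.log ((margX p (A ∪ B ∪ C) x * margX p C x) / (margX p (A ∪ C) x * margX p (B ∪ C) x))

lemma margXY_pos {p : (∀ j, 𝒳 j) → 𝒴 → ℝ} (hpos : ∀ x y, 0 < p x y)
    (T : Finset (Fin d)) (x : ∀ j, 𝒳 j) (y : 𝒴) : 0 < margXY p T x y :=
  sum_pos' (fun x' _ => by split_ifs <;> simp [(hpos x' y).le])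
    ⟨x, mem_univ x, by rw [if_pos fun j _ => rfl]; exact hpos x y⟩

lemma margX_pos [Nonempty 𝒴] {p : (∀ j, 𝒳 j) → 𝒴 → ℝ} (hpos : ∀ x y, 0 < p x y)
    (T : Finset (Fin d)) (x : ∀ j, 𝒳 j) : 0 < margX p T x :=
  sum_pos (fun y _ => margXY_pos hpos T x y) univ_nonempty

lemma pX_pos [Nonempty 𝒴] {p : (∀ j, 𝒳 j) → 𝒴 → ℝ} (hpos : ∀ x y, 0 < p x y)
    (x : ∀ j, 𝒳 j) : 0 < pX p x :=
  sum_pos (fun y _ => hpos x y) univ_nonempty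

lemma margXY_univ (p : (∀ j, 𝒳 j) → 𝒴 → ℝ) (x : ∀ j, 𝒳 j) (y : 𝒴) :
    margXY p univ x y = p x y := by
  rw [margXY, sum_eq_single_of_mem x (mem_univ x) fun x' _ hx' => if_neg fun h =>
    hx' (funext fun j => h j (mem_univ j)), if_pos fun j _ => rfl]

lemma pX_mul_condY_univ [Nonempty 𝒴] {p : (∀ j, 𝒳 j) → 𝒴 → ℝ} (hpos : ∀ x y, 0 < p x y)
    (x : ∀ j, 𝒳 j) (y : 𝒴) : pX p x * condY p univ x y = p x y := by
  rw [condY, margX]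
  simp only [margXY_univ]
  exact mul_div_cancel₀ _ (pX_pos hpos x).ne'

lemma log_condY [Nonempty 𝒴] {p : (∀ j, 𝒳 j) → 𝒴 → ℝ} (hpos : ∀ x y, 0 < p x y)
    (T : Finset (Fin d)) (x : ∀ j, 𝒳 j) (y : 𝒴) :
    Real.log (condY p T x y) = Real.log (margXY p T x y) - Real.log (margX p T x) :=
  Real.log_div (margXY_pos hpos T x y).ne' (margX_pos hpos T x).ne'

lemma log_mul_div_mul {a b c e : ℝ} (ha : 0 < a) (hb : 0 < b) (hc : 0 < c) (he : 0 < e) :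
    Real.log (a * b / (c * e)) = Real.log a + Real.log b - Real.log c - Real.log e := by
  rw [Real.log_div (by positivity) (by positivity), Real.log_mul ha.ne' hb.ne',
    Real.log_mul hc.ne' he.ne']
  ring

lemma margContrib_union_sub [Nonempty 𝒴] {p : (∀ j, 𝒳 j) → 𝒴 → ℝ} (hpos : ∀ x y, 0 < p x y)
    (x : ∀ j, 𝒳 j) {i : Fin d} {U V : Finset (Fin d)} (hiU : i ∉ U) (hiV : i ∉ V) :
    margContrib p x ({i} ∪ V ∪ U) i - margContrib p x ({i} ∪ U) i =
      ∑ y, condY p univ x y * (pmiXY p {i} V U x y - pmiX p {i} V U x) := by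
  have hVU : ({i} ∪ V ∪ U).erase i = V ∪ U := by
    rw [union_assoc, ← insert_eq, erase_insert (by simp [hiU, hiV])]
  have hU : ({i} ∪ U).erase i = U := by rw [← insert_eq, erase_insert hiU]
  simp only [margContrib, impScore, hVU, hU, ← sum_sub_distrib, ← mul_sub]
  refine sum_congr rfl fun y _ => ?_
  simp only [pmiXY, pmiX, log_condY hpos, log_mul_div_mul (margXY_pos hpos _ x y)
    (margXY_pos hpos _ x y) (margXY_pos hpos _ x y) (margXY_pos hpos _ x y),
    log_mul_div_mul (margX_pos hpos _ x) (margX_pos hpos _ x) (margX_pos hpos _ x)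
    (margX_pos hpos _ x)]
  ring

lemma sum_pX_mul_abs_margContrib_union_sub_le [Nonempty 𝒴] {p : (∀ j, 𝒳 j) → 𝒴 → ℝ}
    (hpos : ∀ x y, 0 < p x y) {i : Fin d} {U V : Finset (Fin d)} (hiU : i ∉ U) (hiV : i ∉ V) :
    ∑ x, pX p x * |margContrib p x ({i} ∪ V ∪ U) i - margContrib p x ({i} ∪ U) i|
      ≤ IaXY p {i} V U + IaX p {i} V U := by
  have hpoint : ∀ x, pX p x * |margContrib p x ({i} ∪ V ∪ U) i - margContrib p x ({i} ∪ U) i|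
      ≤ ∑ y, p x y * |pmiXY p {i} V U x y| + pX p x * |pmiX p {i} V U x| := fun x =>
    calc pX p x * |margContrib p x ({i} ∪ V ∪ U) i - margContrib p x ({i} ∪ U) i|
        ≤ ∑ y, p x y * |pmiXY p {i} V U x y - pmiX p {i} V U x| := by
          rw [margContrib_union_sub hpos x hiU hiV, ← abs_of_pos (pX_pos hpos x), ← abs_mul,
            mul_sum]
          simp only [← mul_assoc, pX_mul_condY_univ hpos]
          exact (abs_sum_le_sum_abs _ _).trans_eq
            (sum_congr rfl fun y _ => by rw [abs_mul, abs_of_pos (hpos x y)])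
      _ ≤ ∑ y, p x y * (|pmiXY p {i} V U x y| + |pmiX p {i} V U x|) :=
          sum_le_sum fun y _ => mul_le_mul_of_nonneg_left (abs_sub _ _) (hpos x y).le
      _ = ∑ y, p x y * |pmiXY p {i} V U x y| + pX p x * |pmiX p {i} V U x| := by
          rw [pX, sum_mul, ← sum_add_distrib]
          simp only [mul_add]
  calc ∑ x, pX p x * |margContrib p x ({i} ∪ V ∪ U) i - margContrib p x ({i} ∪ U) i|
      ≤ ∑ x, (∑ y, p x y * |pmiXY p {i} V U x y| + pX p x * |pmiX p {i} V U x|) :=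
        sum_le_sum fun x _ => hpoint x
    _ = IaXY p {i} V U + IaX p {i} V U := sum_add_distrib

lemma shapley_eq_shapleyOn (p : (∀ j, 𝒳 j) → 𝒴 → ℝ) (x : ∀ j, 𝒳 j) (i : Fin d) :
    shapley p x i = shapleyOn univ i (fun A => margContrib p x A i) := by
  rw [shapleyOn_eq, shapley, powerset_univ, card_univ, Fintype.card_fin]

lemma shapleyRes_eq_shapleyOn (p : (∀ j, 𝒳 j) → 𝒴 → ℝ) (x : ∀ j, 𝒳 j) (S : Finset (Fin d))
    (i : Fin d) : shapleyRes p x S i = shapleyOn S i (fun A => margContrib p x A i) := by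
  rw [shapleyOn_eq, shapleyRes]

lemma sum_pX_mul_abs_shapleyOn_sub_le [Nonempty 𝒴] {p : (∀ j, 𝒳 j) → 𝒴 → ℝ}
    (hpos : ∀ x y, 0 < p x y) {i : Fin d} {S D : Finset (Fin d)} (hiS : i ∈ S) (hSD : S ⊆ D)
    {ε : ℝ} (hI : ∀ U ⊆ S.erase i, ∀ V ⊆ univ \ S, IaXY p {i} V U ≤ ε ∧ IaX p {i} V U ≤ ε) :
    ∑ x, pX p x * |shapleyOn D i (fun A => margContrib p x A i) -
      shapleyOn S i (fun A => margContrib p x A i)| ≤ 2 * ε := by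
  simp only [← shapleyOn_inter hSD hiS]
  refine sum_mul_abs_shapleyOn_sub_le (fun x => (pX_pos hpos x).le) (hSD hiS) fun A _ hiA => ?_
  have hA : {i} ∪ (A \ S) ∪ (A ∩ S).erase i = A := by grind
  have hAS : {i} ∪ (A ∩ S).erase i = A ∩ S := by grind
  have hbound := sum_pX_mul_abs_margContrib_union_sub_le (V := A \ S) hpos
    (notMem_erase i (A ∩ S)) (fun h => (mem_sdiff.1 h).2 hiS)
  rw [hA, hAS] at hbound
  obtain ⟨hY, hX⟩ := hI _ (erase_subset_erase i inter_subset_right) _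
    (sdiff_subset_sdiff (subset_univ A) subset_rfl)
  linarith

/-- Theorem 1: if there is a subset `S ⊆ N_k(i)` containing `i` such that for every
`U ⊆ S \ {i}` and `V ⊆ [d] \ S` both `I_a(X_i; X_V | X_U, Y) ≤ ε` and
`I_a(X_i; X_V | X_U) ≤ ε`, then the expected error between the L-Shapley estimate
of order `k` and the Shapley value is at most `4ε`. -/
theorem lshapley_error_le_four_eps (p : (∀ j, 𝒳 j) → 𝒴 → ℝ)
    (hpos : ∀ x y, 0 < p x y)
    (hsum : ∑ x : ∀ j, 𝒳 j, ∑ y, p x y = 1)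
    (G : SimpleGraph (Fin d)) (i : Fin d) (k : ℕ) (ε : ℝ)
    (hS : ∃ S ⊆ nbhd G i k, i ∈ S ∧
      ∀ U ⊆ S.erase i, ∀ V ⊆ Finset.univ \ S,
        IaXY p {i} V U ≤ ε ∧ IaX p {i} V U ≤ ε) :
    ∑ x : ∀ j, 𝒳 j, pX p x * |shapleyRes p x (nbhd G i k) i - shapley p x i|
      ≤ 4 * ε := by
  obtain ⟨S, hSN, hiS, hI⟩ := hS
  have : Nonempty 𝒴 := by
    by_contra h
    simp [not_nonempty_iff.1 h] at hsum
  have hlocal := sum_pX_mul_abs_shapleyOn_sub_le hpos hiS hSN hI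
  have hglobal := sum_pX_mul_abs_shapleyOn_sub_le hpos hiS (subset_univ S) hI
  simp only [shapleyRes_eq_shapleyOn, shapley_eq_shapleyOn]
  refine (sum_mul_abs_sub_le_add univ (fun x _ => (pX_pos hpos x).le)
    (c := fun x => shapleyOn S i (fun A => margContrib p x A i))).trans ?_
  linarith
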